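/- arXiv:1212.0025 — 2 statements merged into one kernel-verified Lean document; each statement's English description precedes it below -/
import Mathlib

section
/- With notation as in the generalized Glynn estimator: for every x ∈ X = R[s_1+1] × ⋯ × R[s_k+1], we have |GenGly_x(A)| ≤ (s_1!⋯s_k!)/√(s_1^{s_1}⋯s_k^{s_k}) · ‖B‖^n. -/
/-!
Since `x_j` is a root of unity, `|y_j| = √s_j`; hence `‖y‖₂ = √n` and the conjugate factor has
modulus `√(∏ s_j^{s_j})`, which cancels half of the denominator. For the remaining product,
AM-GM applied to the numbers `|(By)_i|²` gives `∏ |(By)_i| ≤ (‖By‖₂ / √n)^n ≤ ‖B‖^n`.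
-/

/-- The operator (spectral) 2-norm of a complex matrix. -/
noncomputable def opNorm {m k : ℕ} (A : Matrix (Fin m) (Fin k) ℂ) : ℝ :=
  ‖LinearMap.toContinuousLinearMap (Matrix.toEuclideanLin A)‖

open Finset Matrix

theorem Real.prod_le_arith_mean_pow {ι : Type*} (s : Finset ι) (z : ι → ℝ)
    (hz : ∀ i ∈ s, 0 ≤ z i) : ∏ i ∈ s, z i ≤ ((∑ i ∈ s, z i) / #s) ^ #s := by
  rcases s.eq_empty_or_nonempty with rfl | hs
  · simp
  have hprod : 0 ≤ ∏ i ∈ s, z i := prod_nonneg hz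
  have hgm := Real.geom_mean_le_arith_mean s (fun _ ↦ 1) z (fun _ _ ↦ zero_le_one)
    (by simpa using hs) hz
  simp only [Real.rpow_one, sum_const, nsmul_eq_mul, mul_one, one_mul] at hgm
  calc ∏ i ∈ s, z i = ((∏ i ∈ s, z i) ^ ((#s : ℝ)⁻¹)) ^ #s :=
        (Real.rpow_inv_natCast_pow hprod hs.card_pos.ne').symm
    _ ≤ ((∑ i ∈ s, z i) / #s) ^ #s := by gcongr

theorem EuclideanSpace.prod_norm_apply_le {𝕜 ι : Type*} [RCLike 𝕜] [Fintype ι]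
    (v : EuclideanSpace 𝕜 ι) : ∏ i, ‖v i‖ ≤ (‖v‖ / √(Fintype.card ι)) ^ Fintype.card ι := by
  have hsq : (∏ i, ‖v i‖) ^ 2 ≤ ((‖v‖ / √(Fintype.card ι)) ^ Fintype.card ι) ^ 2 := by
    calc (∏ i, ‖v i‖) ^ 2 = ∏ i, ‖v i‖ ^ 2 := (prod_pow _ _ _).symm
      _ ≤ ((∑ i, ‖v i‖ ^ 2) / Fintype.card ι) ^ Fintype.card ι :=
        Real.prod_le_arith_mean_pow _ _ fun i _ ↦ sq_nonneg _
      _ = ((‖v‖ / √(Fintype.card ι)) ^ Fintype.card ι) ^ 2 := by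
        rw [← pow_mul, mul_comm, pow_mul, div_pow ‖v‖, Real.sq_sqrt (Nat.cast_nonneg _),
          EuclideanSpace.norm_sq_eq]
  exact (pow_le_pow_iff_left₀ (prod_nonneg fun _ _ ↦ norm_nonneg _) (by positivity)
    two_ne_zero).1 hsq

theorem norm_toEuclideanLin_apply_le {m k : ℕ} (A : Matrix (Fin m) (Fin k) ℂ)
    (v : EuclideanSpace ℂ (Fin k)) : ‖Matrix.toEuclideanLin A v‖ ≤ opNorm A * ‖v‖ :=
  (LinearMap.toContinuousLinearMap (Matrix.toEuclideanLin A)).le_opNorm v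

theorem prod_norm_mulVec_le_opNorm_pow {n k : ℕ} (B : Matrix (Fin n) (Fin k) ℂ)
    (y : Fin k → ℂ) (hy : ‖WithLp.toLp 2 y‖ = √n) :
    ∏ i, ‖(B *ᵥ y) i‖ ≤ opNorm B ^ n := by
  have hBy : ‖Matrix.toEuclideanLin B (WithLp.toLp 2 y)‖ / √n ≤ opNorm B :=
    div_le_of_le_mul₀ (Real.sqrt_nonneg _) (norm_nonneg _)
      (hy ▸ norm_toEuclideanLin_apply_le B _)
  calc ∏ i, ‖(B *ᵥ y) i‖ ≤ (‖Matrix.toEuclideanLin B (WithLp.toLp 2 y)‖ / √n) ^ n := by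
        simpa using EuclideanSpace.prod_norm_apply_le (Matrix.toEuclideanLin B (WithLp.toLp 2 y))
    _ ≤ opNorm B ^ n := by gcongr

theorem norm_prod_conj_pow_eq_sqrt {ι : Type*} [Fintype ι] (s : ι → ℕ) (y : ι → ℂ)
    (hy : ∀ j, ‖y j‖ = √(s j)) :
    ‖∏ j, starRingEnd ℂ (y j) ^ s j‖ = √(∏ j, (s j : ℝ) ^ s j) := by
  have hsqrt_pow : ∀ j, √((s j : ℝ) ^ s j) = √(s j) ^ s j := fun j ↦ by
    rw [Real.sqrt_eq_iff_mul_self_eq (by positivity) (by positivity), ← mul_pow,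
      Real.mul_self_sqrt (Nat.cast_nonneg _)]
  rw [Real.sqrt_prod _ fun j _ ↦ by positivity]
  simp only [norm_prod, norm_pow, Complex.norm_conj, hy, hsqrt_pow]

theorem genGlynn_bound_general (n k : ℕ) (s : Fin k → ℕ)
    (hsum : ∑ j, s j = n)
    (B : Matrix (Fin n) (Fin k) ℂ)
    (x : Fin k → ℂ) (hx : ∀ j, x j ^ (s j + 1) = 1) :
    ‖(((∏ j, (s j).factorial : ℕ) : ℂ) / (∏ j, (s j : ℂ) ^ s j) *
        (∏ j, (starRingEnd ℂ) ((Real.sqrt (s j) : ℂ) * x j) ^ s j) *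
        ∏ i, ∑ j, ((Real.sqrt (s j) : ℂ) * x j) * B i j)‖
      ≤ ((∏ j, (s j).factorial : ℕ) : ℝ) / Real.sqrt (∏ j, (s j : ℝ) ^ s j)
          * opNorm B ^ n := by
  set y : Fin k → ℂ := fun j ↦ (√(s j) : ℂ) * x j
  have hy : ∀ j, ‖y j‖ = √(s j) := fun j ↦ by
    simp [y, Complex.norm_eq_one_of_pow_eq_one (hx j) (Nat.succ_ne_zero _)]
  have hy_euclid : ‖WithLp.toLp 2 y‖ = √n := by
    rw [EuclideanSpace.norm_eq, ← hsum]
    simp [hy]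
  have hBy : ∏ i, ‖∑ j, y j * B i j‖ ≤ opNorm B ^ n := by
    simpa only [mulVec, dotProduct, mul_comm] using
      prod_norm_mulVec_le_opNorm_pow B y hy_euclid
  set P : ℝ := ∏ j, (s j : ℝ) ^ s j
  have hnorm_P : ‖∏ j, (s j : ℂ) ^ s j‖ = P := by simp [P]
  have hscalar : ∀ N : ℝ, N / P * √P = N / √P := fun N ↦ by
    rw [div_mul_eq_mul_div, mul_div_assoc, Real.sqrt_div_self, ← div_eq_mul_inv]
  rw [norm_mul, norm_mul, norm_div, hnorm_P, norm_prod_conj_pow_eq_sqrt s y hy, norm_prod,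
    Complex.norm_natCast, hscalar]
  gcongr

/-- **Bound on the generalized Glynn estimator.**  Let `B` be `n × k` complex, `s_1,…,s_k > 0`
with `∑ s_j = n`, and let `x ∈ X = R[s_1+1] × ⋯ × R[s_k+1]` (i.e. `x_j^{s_j+1} = 1`).
With `y_j = √(s_j)·x_j`,
`|GenGly_x(A)| = |(s_1!⋯s_k!)/(s_1^{s_1}⋯s_k^{s_k}) · conj(y_1)^{s_1}⋯conj(y_k)^{s_k} · ∏_i (By)_i|
  ≤ (s_1!⋯s_k!)/√(s_1^{s_1}⋯s_k^{s_k}) · ‖B‖^n`. -/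
theorem genGlynn_bound (n k : ℕ) (s : Fin k → ℕ)
    (hpos : ∀ j, 0 < s j) (hsum : ∑ j, s j = n)
    (B : Matrix (Fin n) (Fin k) ℂ)
    (x : Fin k → ℂ) (hx : ∀ j, x j ^ (s j + 1) = 1) :
    ‖(((∏ j, (s j).factorial : ℕ) : ℂ) / (∏ j, (s j : ℂ) ^ s j) *
        (∏ j, (starRingEnd ℂ) ((Real.sqrt (s j) : ℂ) * x j) ^ s j) *
        ∏ i, ∑ j, ((Real.sqrt (s j) : ℂ) * x j) * B i j)‖
      ≤ ((∏ j, (s j).factorial : ℕ) : ℝ) / Real.sqrt (∏ j, (s j : ℝ) ^ s j)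
          * opNorm B ^ n :=
  genGlynn_bound_general n k s hsum B x hx
end

section
/- Let U be an n×n matrix with ‖U‖ ≤ 1 (e.g., a submatrix of a unitary), s_1,…,s_k positive integers summing to n, and A the n×n matrix with s_j copies of the j-th column of U restricted appropriately. Then |Per(A)|² / (s_1!⋯s_k!) ≤ (s_1!⋯s_k!)/(s_1^{s_1}⋯s_k^{s_k}). -/
open Finset Matrix

section FiberCard

variable {ι κ : Type*} [Fintype ι] [DecidableEq ι] [Fintype κ] [DecidableEq κ]

def mapsWithFiberCard (s : κ → ℕ) : Finset (ι → κ) :=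
  {f | ∀ j, #{i | f i = j} = s j}

/-- The coefficient of `∏ j, X j ^ s j` in the polynomial `∏ i, (B *ᵥ X) i`. -/
def prodMulVecCoeff {R : Type*} [CommSemiring R] (B : Matrix ι κ R) (s : κ → ℕ) : R :=
  ∑ f ∈ mapsWithFiberCard s, ∏ i, B i (f i)

def permFiberEquiv (c f : ι → κ) :
    {σ : Equiv.Perm ι // c ∘ σ = f} ≃ ∀ j, {i // f i = j} ≃ {i // c i = j} where
  toFun σ j := σ.1.subtypeEquiv fun a => by rw [← congrFun σ.2 a, Function.comp_apply]
  invFun e := ⟨Equiv.ofFiberEquiv e, funext (Equiv.ofFiberEquiv_map e)⟩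
  left_inv _ := rfl
  right_inv e := by
    funext j
    ext ⟨a, rfl⟩
    rfl

variable {s : κ → ℕ} {c f : ι → κ}

theorem comp_perm_mem_mapsWithFiberCard (hc : c ∈ mapsWithFiberCard s) (σ : Equiv.Perm ι) :
    c ∘ σ ∈ mapsWithFiberCard s := by
  simp only [mapsWithFiberCard, mem_filter, mem_univ, true_and] at hc ⊢
  intro j
  rw [← hc j, ← Fintype.card_subtype, ← Fintype.card_subtype]
  exact Fintype.card_congr (σ.subtypeEquiv fun _ => Iff.rfl)

theorem card_comp_perm_eq (hc : c ∈ mapsWithFiberCard s) (hf : f ∈ mapsWithFiberCard s) :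
    #{σ : Equiv.Perm ι | c ∘ σ = f} = ∏ j, (s j).factorial := by
  simp only [mapsWithFiberCard, mem_filter, mem_univ, true_and] at hc hf
  rw [← Fintype.card_subtype, Fintype.card_congr (permFiberEquiv c f), Fintype.card_pi]
  refine prod_congr rfl fun j _ => ?_
  have hfj : Fintype.card {i // f i = j} = s j := by rw [Fintype.card_subtype, hf j]
  have hcj : Fintype.card {i // c i = j} = s j := by rw [Fintype.card_subtype, hc j]
  rw [Fintype.card_equiv (Fintype.equivOfCardEq (hfj.trans hcj.symm)), hfj]

theorem sum_perm_prod_comp {R : Type*} [CommSemiring R] (B : Matrix ι κ R)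
    (hc : c ∈ mapsWithFiberCard s) :
    ∑ σ : Equiv.Perm ι, ∏ i, B i (c (σ i)) = (∏ j, (s j).factorial : ℕ) * prodMulVecCoeff B s := by
  rw [prodMulVecCoeff, mul_sum, ← sum_fiberwise_of_maps_to (g := fun σ : Equiv.Perm ι => c ∘ σ)
    fun σ _ => comp_perm_mem_mapsWithFiberCard hc σ]
  refine sum_congr rfl fun f hf => ?_
  rw [← card_comp_perm_eq hc hf, ← nsmul_eq_mul, ← sum_const]
  refine sum_congr rfl fun σ hσ => ?_
  rw [← (mem_filter.1 hσ).2]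
  rfl

theorem prod_mulVec_eq_sum {R : Type*} [CommSemiring R] (B : Matrix ι κ R) (x : κ → R) :
    ∏ i, (B *ᵥ x) i = ∑ f : ι → κ, (∏ i, B i (f i)) * ∏ j, x j ^ #{i | f i = j} := by
  simp only [Matrix.mulVec, dotProduct, Fintype.prod_sum, prod_mul_distrib]
  refine sum_congr rfl fun f _ => ?_
  rw [← prod_fiberwise univ f fun i => x (f i)]
  refine congrArg _ (prod_congr rfl fun j _ => ?_)
  rw [prod_congr rfl fun i hi => congrArg x (mem_filter.1 hi).2, prod_const]

end FiberCard

theorem IsPrimitiveRoot.sum_pow_mul_inv_pow {K : Type*} [Field K] {ζ : K} {N : ℕ}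
    (hζ : IsPrimitiveRoot ζ N) {m s : ℕ} (hm : m < N) (hs : s < N) :
    ∑ u ∈ range N, (ζ ^ m * (ζ ^ s)⁻¹) ^ u = if m = s then (N : K) else 0 := by
  have hζ0 : ζ ≠ 0 := hζ.ne_zero (by omega)
  split_ifs with hms
  · simp [hms, hζ0]
  · have hw1 : ζ ^ m * (ζ ^ s)⁻¹ ≠ 1 := by
      rw [Ne, mul_inv_eq_one₀ (pow_ne_zero _ hζ0)]
      exact fun h => hms (hζ.pow_inj hm hs h)
    rw [geom_sum_eq hw1, mul_pow, inv_pow, ← pow_mul, ← pow_mul, mul_comm m, mul_comm s,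
      pow_mul, pow_mul, hζ.pow_eq_one]
    simp

theorem IsPrimitiveRoot.sum_prod_mulVec_eq_prodMulVecCoeff {ι κ K : Type*} [Fintype ι]
    [DecidableEq ι] [Fintype κ] [DecidableEq κ] [Field K] {ζ : K} {N : ℕ}
    (hζ : IsPrimitiveRoot ζ N) (hN : Fintype.card ι < N) {s : κ → ℕ} (hs : ∀ j, s j < N)
    (B : Matrix ι κ K) (r : κ → K) :
    ∑ t : κ → Fin N, (∏ i, (B *ᵥ fun j => r j * ζ ^ (t j : ℕ)) i) * ∏ j, ((ζ ^ s j)⁻¹) ^ (t j : ℕ)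
      = N ^ Fintype.card κ * (∏ j, r j ^ s j) * prodMulVecCoeff B s := by
  have inner (j : κ) {m : ℕ} (hm : m < N) :
      ∑ u : Fin N, (r j * ζ ^ (u : ℕ)) ^ m * ((ζ ^ s j)⁻¹) ^ (u : ℕ)
        = if m = s j then N * r j ^ s j else 0 := by
    simp_rw [mul_pow, ← pow_mul, mul_comm _ m, pow_mul, mul_assoc, ← mul_pow, ← mul_sum]
    rw [Fin.sum_univ_eq_sum_range (fun u => (ζ ^ m * (ζ ^ s j)⁻¹) ^ u),
      hζ.sum_pow_mul_inv_pow hm (hs j)]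
    split_ifs with h <;> simp [h, mul_comm]
  calc _ = ∑ f : ι → κ, (∏ i, B i (f i)) *
        ∏ j, ∑ u : Fin N, (r j * ζ ^ (u : ℕ)) ^ #{i | f i = j} * ((ζ ^ s j)⁻¹) ^ (u : ℕ) := by
        simp_rw [prod_mulVec_eq_sum, sum_mul, Fintype.prod_sum]
        rw [sum_comm]
        simp_rw [mul_sum, mul_assoc, prod_mul_distrib]
    _ = ∑ f : ι → κ, (∏ i, B i (f i)) *
        if f ∈ mapsWithFiberCard s then ∏ j, (N * r j ^ s j) else 0 := by
        refine sum_congr rfl fun f _ => ?_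
        have hcard (j : κ) : #{i | f i = j} < N := (card_filter_le _ _).trans_lt hN
        simp_rw [inner _ (hcard _), Fintype.prod_ite_zero, mapsWithFiberCard, mem_filter,
          mem_univ, true_and]
    _ = _ := by
        simp_rw [mul_ite, mul_zero]
        rw [← sum_filter, filter_mem_eq_inter, univ_inter, prodMulVecCoeff, mul_sum]
        refine sum_congr rfl fun f _ => ?_
        rw [prod_mul_distrib, prod_const, card_univ, mul_comm]

theorem prod_le_sum_div_card_pow {ι : Type*} [Fintype ι] (z : ι → ℝ) (hz : ∀ i, 0 ≤ z i) :
    ∏ i, z i ≤ ((∑ i, z i) / Fintype.card ι) ^ Fintype.card ι := by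
  rcases isEmpty_or_nonempty ι with hι | hι
  · simp
  have hn : (0 : ℝ) < Fintype.card ι := by exact_mod_cast Fintype.card_pos
  have amgm := Real.geom_mean_le_arith_mean univ (fun _ => 1) z (by simp) (by simpa using hn)
    fun i _ => hz i
  simp only [Real.rpow_one, sum_const, card_univ, nsmul_eq_mul, mul_one, one_mul] at amgm
  calc ∏ i, z i = ((∏ i, z i) ^ (Fintype.card ι : ℝ)⁻¹) ^ Fintype.card ι := by
        rw [← Real.rpow_natCast, ← Real.rpow_mul (prod_nonneg fun i _ => hz i),
          inv_mul_cancel₀ hn.ne', Real.rpow_one]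
    _ ≤ _ := pow_le_pow_left₀ (Real.rpow_nonneg (prod_nonneg fun i _ => hz i) _) amgm _

theorem norm_prod_sq_le {ι 𝕜 : Type*} [Fintype ι] [NormedField 𝕜] (y : ι → 𝕜) :
    ‖∏ i, y i‖ ^ 2 ≤ ((∑ i, ‖y i‖ ^ 2) / Fintype.card ι) ^ Fintype.card ι := by
  rw [norm_prod, ← prod_pow]
  exact prod_le_sum_div_card_pow _ fun i => sq_nonneg _

theorem sum_norm_mulVec_sq_le_of_opNorm_le_one {m k : ℕ} {B : Matrix (Fin m) (Fin k) ℂ}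
    (hB : opNorm B ≤ 1) (x : Fin k → ℂ) : ∑ i, ‖(B *ᵥ x) i‖ ^ 2 ≤ ∑ j, ‖x j‖ ^ 2 := by
  have h := (LinearMap.toContinuousLinearMap (Matrix.toEuclideanLin B)).le_of_opNorm_le hB
    (WithLp.toLp 2 x)
  rw [one_mul] at h
  have := pow_le_pow_left₀ (norm_nonneg _) h 2
  simpa [EuclideanSpace.norm_sq_eq, Matrix.toEuclideanLin] using this

theorem norm_prod_mulVec_le_one {ι κ 𝕜 : Type*} [Fintype ι] [Fintype κ] [NormedField 𝕜]
    {B : Matrix ι κ 𝕜}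
    (hB : ∀ x, ∑ i, ‖(B *ᵥ x) i‖ ^ 2 ≤ ∑ j, ‖x j‖ ^ 2) {x : κ → 𝕜}
    (hx : ∑ j, ‖x j‖ ^ 2 ≤ Fintype.card ι) : ‖∏ i, (B *ᵥ x) i‖ ≤ 1 := by
  rw [← sq_le_one_iff₀ (norm_nonneg _)]
  calc _ ≤ _ := norm_prod_sq_le _
    _ ≤ ((Fintype.card ι : ℝ) / Fintype.card ι) ^ Fintype.card ι := by
        gcongr
        exact (hB x).trans hx
    _ ≤ 1 := pow_le_one₀ (by positivity) (div_self_le_one _)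

theorem norm_prodMulVecCoeff_sq_mul_prod_le_one {ι κ : Type*} [Fintype ι] [DecidableEq ι]
    [Fintype κ] [DecidableEq κ] {B : Matrix ι κ ℂ}
    (hB : ∀ x, ∑ i, ‖(B *ᵥ x) i‖ ^ 2 ≤ ∑ j, ‖x j‖ ^ 2) {s : κ → ℕ}
    (hs : ∑ j, s j = Fintype.card ι) :
    ‖prodMulVecCoeff B s‖ ^ 2 * ∏ j, (s j : ℝ) ^ s j ≤ 1 := by
  set n := Fintype.card ι
  obtain ⟨ζ, hζ⟩ : ∃ ζ : ℂ, IsPrimitiveRoot ζ (n + 1) :=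
    ⟨_, Complex.isPrimitiveRoot_exp _ n.succ_ne_zero⟩
  have hζ1 : ‖ζ‖ = 1 := hζ.norm'_eq_one n.succ_ne_zero
  have hsn (j : κ) : s j < n + 1 := Nat.lt_succ_of_le (hs ▸ single_le_sum (by simp) (mem_univ j))
  set r : κ → ℂ := fun j => (√(s j : ℝ) : ℂ)
  have hr (j : κ) : ‖r j‖ = √(s j : ℝ) := by simp [r]
  have hterm (t : κ → Fin (n + 1)) :
      ‖(∏ i, (B *ᵥ fun j => r j * ζ ^ (t j : ℕ)) i) * ∏ j, ((ζ ^ s j)⁻¹) ^ (t j : ℕ)‖ ≤ 1 := by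
    have hweight : ‖∏ j, ((ζ ^ s j)⁻¹) ^ (t j : ℕ)‖ = 1 := by simp [norm_prod, hζ1]
    rw [norm_mul, hweight, mul_one]
    exact norm_prod_mulVec_le_one hB (by simp [hr, hζ1, ← Nat.cast_sum, hs, n])
  have hbound : ((n + 1 : ℕ) : ℝ) ^ Fintype.card κ *
      ((∏ j, √(s j : ℝ) ^ s j) * ‖prodMulVecCoeff B s‖)
        ≤ ((n + 1 : ℕ) : ℝ) ^ Fintype.card κ * 1 := by
    calc _ = ‖((n + 1 : ℕ) : ℂ) ^ Fintype.card κ * (∏ j, r j ^ s j) * prodMulVecCoeff B s‖ := by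
          simp only [norm_mul, norm_pow, norm_prod, Complex.norm_natCast, hr, mul_assoc]
      _ ≤ _ := by
          rw [← hζ.sum_prod_mulVec_eq_prodMulVecCoeff n.lt_succ_self hsn B r]
          refine (norm_sum_le _ _).trans ((sum_le_card_nsmul _ _ _ fun t _ => hterm t).trans ?_)
          simp
  calc _ = ((∏ j, √(s j : ℝ) ^ s j) * ‖prodMulVecCoeff B s‖) ^ 2 := by
        rw [mul_pow, mul_comm, ← prod_pow]
        simp_rw [← pow_mul, mul_comm _ 2, pow_mul, Real.sq_sqrt (Nat.cast_nonneg _)]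
    _ ≤ 1 := pow_le_one₀ (by positivity) (le_of_mul_le_mul_left hbound (by positivity))

theorem outcome_probability_bound_general (n k : ℕ) (s : Fin k → ℕ)
    (hsum : ∑ j, s j = n)
    (B : Matrix (Fin n) (Fin k) ℂ) (hB : opNorm B ≤ 1)
    (c : Fin n → Fin k)
    (hc : ∀ j, (Finset.univ.filter fun i => c i = j).card = s j)
    (A : Matrix (Fin n) (Fin n) ℂ) (hA : ∀ i m, A i m = B i (c m)) :
    ‖(∑ σ : Equiv.Perm (Fin n), ∏ i, A i (σ i))‖ ^ 2
        / ((∏ j, (s j).factorial : ℕ) : ℝ)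
      ≤ ((∏ j, (s j).factorial : ℕ) : ℝ) / (∏ j, (s j : ℝ) ^ s j) := by
  have hper : ∑ σ : Equiv.Perm (Fin n), ∏ i, A i (σ i)
      = (∏ j, (s j).factorial : ℕ) * prodMulVecCoeff B s := by
    simp only [hA]
    exact sum_perm_prod_comp B (by simpa [mapsWithFiberCard] using hc)
  have hcoeff : ‖prodMulVecCoeff B s‖ ^ 2 * ∏ j, (s j : ℝ) ^ s j ≤ 1 :=
    norm_prodMulVecCoeff_sq_mul_prod_le_one (sum_norm_mulVec_sq_le_of_opNorm_le_one hB)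
      (by simpa using hsum)
  have hfact : (0 : ℝ) < (∏ j, (s j).factorial : ℕ) := by positivity
  have hpow : (0 : ℝ) < ∏ j, (s j : ℝ) ^ s j :=
    prod_pos fun j _ => by exact_mod_cast Nat.pow_self_pos
  rw [hper, norm_mul, Complex.norm_natCast, mul_pow, sq, mul_assoc,
    mul_div_cancel_left₀ _ hfact.ne', le_div_iff₀ hpow, mul_assoc]
  exact mul_le_of_le_one_right hfact.le hcoeff

/-- **Bound on "bunched" outcome probabilities.**  Let `B` be `n × k` with `‖B‖ ≤ 1`
(e.g. a submatrix of a unitary), `s_1,…,s_k > 0` summing to `n`, and `A` the `n × n`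
matrix with `s_j` copies of column `j` of `B`.  Then the quantum-optical outcome
probability satisfies `|Per(A)|²/(s_1!⋯s_k!) ≤ (s_1!⋯s_k!)/(s_1^{s_1}⋯s_k^{s_k})`. -/
theorem outcome_probability_bound (n k : ℕ) (s : Fin k → ℕ)
    (hpos : ∀ j, 0 < s j) (hsum : ∑ j, s j = n)
    (B : Matrix (Fin n) (Fin k) ℂ) (hB : opNorm B ≤ 1)
    (c : Fin n → Fin k)
    (hc : ∀ j, (Finset.univ.filter fun i => c i = j).card = s j)
    (A : Matrix (Fin n) (Fin n) ℂ) (hA : ∀ i m, A i m = B i (c m)) :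
    ‖(∑ σ : Equiv.Perm (Fin n), ∏ i, A i (σ i))‖ ^ 2
        / ((∏ j, (s j).factorial : ℕ) : ℝ)
      ≤ ((∏ j, (s j).factorial : ℕ) : ℝ) / (∏ j, (s j : ℝ) ^ s j) :=
  outcome_probability_bound_general n k s hsum B hB c hc A hA
end
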